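/- arXiv:1512.00495 — 2 statements merged into one kernel-verified Lean document; each statement's English description precedes it below -/
import Mathlib

section
/- Let k be a difference field. If R and S are σ-separable k-σ-algebras, then R ⊗_k S is a σ-separable k-σ-algebra. -/
/-!
Let `K` be a difference field over `k`. Since everything is flat over `k`, the embedding of `K`
into its inversive closure `colim (K →σ K →σ ⋯)` stays injective after tensoring with `R ⊗ S`,
so we may assume `σ` surjective on `K`. Then `K ⊗ (R ⊗ S) ≅ (K ⊗ R) ⊗_K (K ⊗ S)` carries `σ` to
the tensor product of the `σ`-semilinear endomorphisms of `K ⊗ R` and `K ⊗ S`, which are injective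
by σ-separability of `R` and `S`. Over fields, a tensor product of injective `σ`-semilinear maps is
injective once `σ` is surjective: the image of a basis is then still linearly independent.
-/

open TensorProduct

/-- The diagonal endomorphism `σ(a ⊗ b) = σ(a) ⊗ σ(b)` of `A ⊗_k B` is injective
(i.e. `A ⊗_k B` is σ-reduced): any ring endomorphism satisfying the defining rule
on pure tensors is injective. -/
def SigmaReducedTensor (k A B : Type) [CommRing k] [CommRing A] [CommRing B]
    [Algebra k A] [Algebra k B] (σA : A →+* A) (σB : B →+* B) : Prop :=
  ∀ τ : (A ⊗[k] B) →+* A ⊗[k] B,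
    (∀ (a : A) (b : B), τ (a ⊗ₜ[k] b) = σA a ⊗ₜ[k] σB b) → Function.Injective τ

/-- A `k`-σ-algebra `R` is σ-separable over `k` if `R ⊗_k K` is σ-reduced for
every difference field extension `K` of `k`. -/
def IsSigmaSeparable (k R : Type) [Field k] [CommRing R] [Algebra k R]
    (σk : k →+* k) (σR : R →+* R) : Prop :=
  ∀ (K : Type) [Field K] [Algebra k K], ∀ σK : K →+* K,
    (∀ x : k, σK (algebraMap k K x) = algebraMap k K (σk x)) →
    SigmaReducedTensor k K R σK σR

section Semilinear

variable {k k' A A' : Type*} [CommSemiring k] [CommSemiring k'] [Semiring A] [Semiring A']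
  [Algebra k A] [Algebra k' A']

def RingHom.toSemilinearMapOfComp (f : A →+* A') {σ : k →+* k'}
    (hf : f.comp (algebraMap k A) = (algebraMap k' A').comp σ) : A →ₛₗ[σ] A' where
  toFun := f
  map_add' := map_add f
  map_smul' c a := by
    rw [Algebra.smul_def, Algebra.smul_def, map_mul, ← RingHom.comp_apply, hf]
    rfl

@[simp]
lemma RingHom.toSemilinearMapOfComp_apply (f : A →+* A') {σ : k →+* k'}
    (hf : f.comp (algebraMap k A) = (algebraMap k' A').comp σ) (a : A) :
    f.toSemilinearMapOfComp hf a = f a := rfl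

end Semilinear

section LinearIndependent

variable {R M N ι : Type*} [CommRing R] [AddCommGroup M] [Module R M] [Module.Flat R M]
  [AddCommGroup N] [Module R N]

lemma TensorProduct.sum_tmul_linearIndependent_right_eq_zero {w : ι → N}
    (hw : LinearIndependent R w) (m : ι →₀ M) (h : (m.sum fun i x => x ⊗ₜ[R] w i) = 0) :
    m = 0 := by
  let b := Module.Basis.span hw
  apply TensorProduct.sum_tmul_basis_right_eq_zero b
  apply Module.Flat.lTensor_preserves_injective_linearMap _ (Submodule.injective_subtype _)
  simpa [map_finsuppSum, b, Module.Basis.span_apply] using h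

end LinearIndependent

section MapInjective

variable {K L A B A' B' : Type*} [Field K] [Field L] {σ : K →+* L}
  [AddCommGroup A] [Module K A] [AddCommGroup B] [Module K B]
  [AddCommGroup A'] [Module L A'] [AddCommGroup B'] [Module L B']

theorem TensorProduct.map_injective_of_surjective_ringHom (hσ : Function.Surjective σ)
    {f : A →ₛₗ[σ] A'} {g : B →ₛₗ[σ] B'} (hf : Function.Injective f) (hg : Function.Injective g) :
    Function.Injective (TensorProduct.map f g) := by
  rw [injective_iff_map_eq_zero]
  intro x hx
  let c := Module.Basis.ofVectorSpace K B
  obtain ⟨m, rfl⟩ := TensorProduct.eq_repr_basis_right c x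
  have hgc : LinearIndependent L (g ∘ c) :=
    c.linearIndependent.map_of_surjective_injectiveₛ σ g.toAddMonoidHom hσ hg g.map_smulₛₗ
  have hfm : m.mapRange f f.map_zero = 0 := by
    refine sum_tmul_linearIndependent_right_eq_zero hgc _ ?_
    rw [Finsupp.sum_mapRange_index (fun _ => by simp), ← hx, map_finsuppSum]
    rfl
  have hm : m = 0 :=
    Finsupp.mapRange_injective f f.map_zero hf (hfm.trans (Finsupp.mapRange_zero).symm)
  simp [hm]

end MapInjective

section Descent

variable {k A A' B : Type} [CommRing k] [CommRing A] [CommRing A'] [CommRing B]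
  [Algebra k A] [Algebra k A'] [Algebra k B] [Module.Flat k B]
  {σk : k →+* k} {σA : A →+* A} {σA' : A' →+* A'} {σB : B →+* B}

theorem SigmaReducedTensor.of_injective
    (hA' : ∀ x : k, σA' (algebraMap k A' x) = algebraMap k A' (σk x))
    (hB : ∀ x : k, σB (algebraMap k B x) = algebraMap k B (σk x))
    (ι : A →ₐ[k] A') (hι : Function.Injective ι) (hισ : ∀ a, σA' (ι a) = ι (σA a))
    (h : SigmaReducedTensor k A' B σA' σB) : SigmaReducedTensor k A B σA σB := by
  intro τ hτ
  let τ' := Algebra.TensorProduct.mapRingHom σk σA' σB (RingHom.ext hA') (RingHom.ext hB)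
  let J := ι.toLinearMap.rTensor B
  have hJ : Function.Injective J := Module.Flat.rTensor_preserves_injective_linearMap _ hι
  have hJτ : ∀ x, J (τ x) = τ' (J x) := by
    intro x
    induction x with
    | zero => simp
    | tmul a b => simp [J, τ', hτ, hισ]
    | add x y hx hy => simp only [map_add, hx, hy]
  refine Function.Injective.of_comp (f := J) ?_
  rw [show J ∘ τ = τ' ∘ J from funext hJτ]
  exact (h τ' (Algebra.TensorProduct.mapRingHom_tmul _ _ _ _ _)).comp hJ

end Descent

section Inversive

variable {k R S : Type} [Field k] [CommRing R] [Algebra k R] [CommRing S] [Algebra k S]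
  {σk : k →+* k} {σR : R →+* R} {σS : S →+* S}

theorem IsSigmaSeparable.sigmaReducedTensor_tensorProduct_of_surjective
    (hcompR : ∀ x : k, σR (algebraMap k R x) = algebraMap k R (σk x))
    (hcompS : ∀ x : k, σS (algebraMap k S x) = algebraMap k S (σk x))
    (hR : IsSigmaSeparable k R σk σR) (hS : IsSigmaSeparable k S σk σS)
    {K : Type} [Field K] [Algebra k K] {σK : K →+* K}
    (hcompK : ∀ x : k, σK (algebraMap k K x) = algebraMap k K (σk x))
    (hσK : Function.Surjective σK)
    (σT : R ⊗[k] S →+* R ⊗[k] S) (hσT : ∀ r s, σT (r ⊗ₜ s) = σR r ⊗ₜ σS s) :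
    SigmaReducedTensor k K (R ⊗[k] S) σK σT := by
  intro τ hτ
  let fR := Algebra.TensorProduct.mapRingHom σk σK σR (RingHom.ext hcompK) (RingHom.ext hcompR)
  let fS := Algebra.TensorProduct.mapRingHom σk σK σS (RingHom.ext hcompK) (RingHom.ext hcompS)
  have hfR : Function.Injective fR :=
    hR K σK hcompK fR (Algebra.TensorProduct.mapRingHom_tmul _ _ _ _ _)
  have hfS : Function.Injective fS :=
    hS K σK hcompK fS (Algebra.TensorProduct.mapRingHom_tmul _ _ _ _ _)
  let g := TensorProduct.map
    (fR.toSemilinearMapOfComp (Algebra.TensorProduct.mapRingHom_comp_includeLeftRingHom ..))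
    (fS.toSemilinearMapOfComp (Algebra.TensorProduct.mapRingHom_comp_includeLeftRingHom ..))
  have hg : Function.Injective g := TensorProduct.map_injective_of_surjective_ringHom hσK hfR hfS
  let Φ := TensorProduct.AlgebraTensorModule.distribBaseChange k K R S
  have hΦ : ∀ x, Φ (τ x) = g (Φ x) := by
    intro x
    induction x with
    | zero => simp
    | add x y hx hy => simp only [map_add, hx, hy]
    | tmul a t =>
      induction t with
      | zero => simp
      | add t t' ht ht' => simp only [tmul_add, map_add, ht, ht']
      | tmul r s => simp [Φ, g, fR, fS, hτ, hσT]
  refine Function.Injective.of_comp (f := Φ) ?_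
  rw [show Φ ∘ τ = g ∘ Φ from funext hΦ]
  exact hg.comp Φ.injective

end Inversive

abbrev InversiveClosure.transition {K : Type} [Field K] (σ : K →+* K) (i j : ℕ) (_ : i ≤ j) :
    K →+* K :=
  σ ^ (j - i)

instance {K : Type} [Field K] (σ : K →+* K) :
    DirectedSystem (fun _ : ℕ => K) fun i j h => InversiveClosure.transition σ i j h where
  map_self i x := by simp
  map_map {i j l} hij hjl x := by
    simp only [InversiveClosure.transition, RingHom.coe_pow, ← Function.iterate_add_apply]
    congr 1
    omega

abbrev InversiveClosure {K : Type} [Field K] (σ : K →+* K) : Type :=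
  Ring.DirectLimit (fun _ : ℕ => K) fun i j h => ⇑(InversiveClosure.transition σ i j h)

namespace InversiveClosure

variable {K : Type} [Field K] (σ : K →+* K)

noncomputable instance : Field (InversiveClosure σ) :=
  Field.DirectLimit.field (fun _ : ℕ => K) (transition σ)

noncomputable abbrev of (n : ℕ) : K →+* InversiveClosure σ :=
  Ring.DirectLimit.of (fun _ : ℕ => K) (fun i j h => ⇑(transition σ i j h)) n

noncomputable abbrev lift : InversiveClosure σ →+* InversiveClosure σ :=
  Ring.DirectLimit.map (fun _ => σ) fun i j _ => by
    ext x
    simp only [RingHom.coe_comp, Function.comp_apply, transition, RingHom.coe_pow]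
    rw [← Function.iterate_succ_apply' σ, ← Function.iterate_succ_apply σ]

lemma lift_of (n : ℕ) (x : K) : lift σ (of σ n x) = of σ n (σ x) :=
  Ring.DirectLimit.map_apply_of _ _ _

lemma of_succ_apply (n : ℕ) (x : K) : of σ (n + 1) (σ x) = of σ n x := by
  have h := Ring.DirectLimit.of_f (G := fun _ : ℕ => K)
    (f := fun i j h => ⇑(transition σ i j h)) (Nat.le_succ n) x
  rwa [transition, Nat.succ_sub n.le_refl, Nat.sub_self, pow_one] at h

lemma lift_surjective : Function.Surjective (lift σ) := by
  intro z
  induction z using Ring.DirectLimit.induction_on with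
  | ih n x => exact ⟨of σ (n + 1) x, by rw [lift_of, of_succ_apply]⟩

end InversiveClosure

theorem RingHom.exists_surjective_extension {K : Type} [Field K] (σ : K →+* K) :
    ∃ (L : Type) (_ : Field L) (ι : K →+* L) (σL : L →+* L),
      Function.Surjective σL ∧ ∀ x, σL (ι x) = ι (σ x) :=
  ⟨InversiveClosure σ, inferInstance, InversiveClosure.of σ 0, InversiveClosure.lift σ,
    InversiveClosure.lift_surjective σ, fun x => InversiveClosure.lift_of σ 0 x⟩

/-- The tensor product of two σ-separable `k`-σ-algebras is σ-separable. -/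
theorem strongly_etale_stmt4
    (k R S : Type) [Field k] [CommRing R] [Algebra k R] [CommRing S] [Algebra k S]
    (σk : k →+* k) (σR : R →+* R) (σS : S →+* S)
    (hcompR : ∀ x : k, σR (algebraMap k R x) = algebraMap k R (σk x))
    (hcompS : ∀ x : k, σS (algebraMap k S x) = algebraMap k S (σk x))
    (hR : IsSigmaSeparable k R σk σR) (hS : IsSigmaSeparable k S σk σS) :
    ∀ σT : (R ⊗[k] S) →+* R ⊗[k] S,
      (∀ (r : R) (s : S), σT (r ⊗ₜ[k] s) = σR r ⊗ₜ[k] σS s) →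
      IsSigmaSeparable k (R ⊗[k] S) σk σT := by
  intro σT hσT K _ _ σK hcompK
  obtain ⟨L, _, ι, σL, hσL, hισ⟩ := σK.exists_surjective_extension
  let _ : Algebra k L := (ι.comp (algebraMap k K)).toAlgebra
  have hcompL : ∀ x : k, σL (algebraMap k L x) = algebraMap k L (σk x) := fun x => by
    simp [RingHom.algebraMap_toAlgebra, hισ, hcompK]
  have hcompT : ∀ x : k, σT (algebraMap k (R ⊗[k] S) x) = algebraMap k (R ⊗[k] S) (σk x) :=
    fun x => by simp [Algebra.TensorProduct.algebraMap_apply, hσT, hcompR]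
  exact SigmaReducedTensor.of_injective hcompL hcompT { ι with commutes' := fun _ => rfl }
    ι.injective hισ
    (hR.sigmaReducedTensor_tensorProduct_of_surjective hcompR hcompS hS hcompL hσL σT hσT)
end

section
/- Let k be an algebraically closed field, K a field extension of k, and R a k-algebra. Then every idempotent element e of R ⊗_k K is of the form f ⊗ 1 for some idempotent f ∈ R. -/
/-!
After replacing `K` by a finitely generated `k`-subalgebra `A` containing the coefficients of `e`,
`A` is a Jacobson domain whose maximal ideals are the kernels of its `k`-points (Nullstellensatz).
Writing `e = ∑ bᵢ ⊗ aᵢ` in a `k`-basis `b` of `R`, every `k`-point `φ` of `A` specialises `e` to an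
idempotent `∑ φ(aᵢ) bᵢ` of one fixed finite-dimensional subspace of `R`, and such a subspace
contains only finitely many idempotents `f`. Hence every maximal ideal of `A` contains the ideal
generated by the coefficients of `e - f ⊗ 1` for one of finitely many `f`. The product of these
ideals lies in the Jacobson radical of `A`, which is zero; as `A` is a domain, one of them vanishes,
i.e. `e = f ⊗ 1`.
-/

open TensorProduct

theorem IsIdempotentElem.isIntegral {k R : Type*} [CommRing k] [Ring R] [Algebra k R] {x : R}
    (hx : IsIdempotentElem x) : IsIntegral k x :=
  ⟨Polynomial.X ^ 2 - Polynomial.X,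
    Polynomial.monic_X_pow_sub (Polynomial.degree_X_le.trans_lt (by decide)),
    by simp [sq, hx.eq]⟩

theorem finite_setOf_isIdempotentElem (k : Type*) {S : Type*} [Field k] [CommRing S]
    [Algebra k S] [FiniteDimensional k S] : {e : S | IsIdempotentElem e}.Finite :=
  have : IsArtinianRing S := IsArtinianRing.of_finite k S
  Set.finite_coe_iff.mp <| Finite.of_equiv _ PrimeSpectrum.isIdempotentElemEquivClopens.toEquiv.symm

/-- The idempotents in `span k s` lie in the subalgebra generated by finitely many of them, which
is finite-dimensional because idempotents are integral. -/
theorem finite_setOf_isIdempotentElem_mem_span {k R : Type*} [Field k] [CommRing R] [Algebra k R]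
    {s : Set R} (hs : s.Finite) :
    {x | x ∈ Submodule.span k s ∧ IsIdempotentElem x}.Finite := by
  set E := {x | x ∈ Submodule.span k s ∧ IsIdempotentElem x}
  obtain ⟨b, hbE, hspan, hli⟩ := exists_linearIndependent k E
  have : Finite s := hs
  have hb : b.Finite := hli.finite_of_le_span_finite _ s <| by
    simpa using hbE.trans fun x hx => hx.1
  have : Module.Finite k (Algebra.adjoin k b) :=
    Algebra.finite_adjoin_of_finite_of_isIntegral hb fun x hx => (hbE hx).2.isIntegral
  have hE : E ⊆ Subtype.val '' {y : Algebra.adjoin k b | IsIdempotentElem y} := fun x hx =>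
    have hxb : x ∈ Algebra.adjoin k b :=
      Algebra.span_le_adjoin k b (hspan ▸ Submodule.subset_span hx)
    ⟨⟨x, hxb⟩, Subtype.ext hx.2.eq, rfl⟩
  exact ((finite_setOf_isIdempotentElem k).image _).subset hE

theorem exists_algHom_ker_eq_of_isMaximal (k : Type*) {A : Type*} [Field k] [IsAlgClosed k]
    [CommRing A] [Algebra k A] [Algebra.FiniteType k A] (m : Ideal A) [m.IsMaximal] :
    ∃ φ : A →ₐ[k] k, RingHom.ker φ = m := by
  let := Ideal.Quotient.field m
  have : Module.Finite k (A ⧸ m) := finite_of_finite_type_of_isJacobsonRing k (A ⧸ m)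
  let ψ : (A ⧸ m) →ₐ[k] k := IsAlgClosed.lift
  refine ⟨ψ.comp (Ideal.Quotient.mkₐ k m), Ideal.ext fun a => ?_⟩
  rw [RingHom.mem_ker, AlgHom.comp_apply, map_eq_zero_iff ψ ψ.toRingHom.injective,
    Ideal.Quotient.mkₐ_eq_mk, Ideal.Quotient.eq_zero_iff_mem]

theorem IsJacobsonRing.exists_eq_bot_of_forall_isMaximal {A ι : Type*} [CommRing A] [IsDomain A]
    [IsJacobsonRing A] {s : Finset ι} {I : ι → Ideal A}
    (h : ∀ m : Ideal A, m.IsMaximal → ∃ i ∈ s, I i ≤ m) : ∃ i ∈ s, I i = ⊥ := by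
  have hle : ∏ i ∈ s, I i ≤ Ideal.jacobson ⊥ := le_sInf fun m ⟨_, hm⟩ =>
    have ⟨i, hi, him⟩ := h m hm
    Ideal.prod_le_inf.trans <| (Finset.inf_le hi).trans him
  rwa [← Ideal.radical_eq_jacobson, Ideal.radical_bot_of_isReduced, le_bot_iff,
    ← Ideal.zero_eq_bot, Finset.prod_eq_zero_iff] at hle

namespace TensorProduct

variable {k R A ι : Type*} [CommRing k] [CommRing R] [Algebra k R] [CommRing A] [Algebra k A]

def evalRight (φ : A →ₐ[k] k) : R ⊗[k] A →ₐ[k] R :=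
  (Algebra.TensorProduct.rid k k R).toAlgHom.comp (Algebra.TensorProduct.map (.id k R) φ)

@[simp]
theorem evalRight_tmul (φ : A →ₐ[k] k) (r : R) (a : A) : evalRight φ (r ⊗ₜ a) = φ a • r := by
  simp [evalRight]

variable (B : Module.Basis ι k R)

open Classical in
def coeffIdeal (z : R ⊗[k] A) : Ideal A :=
  Ideal.span (Set.range (equivFinsuppOfBasisLeft B z))

theorem coeffIdeal_eq_bot_iff {z : R ⊗[k] A} : coeffIdeal B z = ⊥ ↔ z = 0 := by
  classical
  simp only [coeffIdeal, Ideal.span_eq_bot, Set.forall_mem_range]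
  rw [← (equivFinsuppOfBasisLeft B).map_eq_zero_iff, Finsupp.ext_iff]
  simp

theorem repr_evalRight [DecidableEq ι] (φ : A →ₐ[k] k) (z : R ⊗[k] A) (i : ι) :
    B.repr (evalRight φ z) i = φ (equivFinsuppOfBasisLeft B z i) := by
  induction z using TensorProduct.induction_on with
  | zero => simp
  | tmul r a => simp [mul_comm]
  | add x y hx hy => simp [hx, hy]

theorem coeffIdeal_le_ker_of_evalRight_eq_zero {φ : A →ₐ[k] k} {z : R ⊗[k] A}
    (h : evalRight φ z = 0) : coeffIdeal B z ≤ RingHom.ker φ := by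
  classical
  refine Ideal.span_le.mpr ?_
  rintro - ⟨i, rfl⟩
  simp [← repr_evalRight, h]

theorem evalRight_mem_span [DecidableEq ι] (φ : A →ₐ[k] k) (z : R ⊗[k] A) :
    evalRight φ z ∈ Submodule.span k (B '' (equivFinsuppOfBasisLeft B z).support) := by
  rw [B.mem_span_image]
  exact fun i hi => Finsupp.mem_support_iff.2 fun h =>
    Finsupp.mem_support_iff.1 hi (by rw [repr_evalRight, h, map_zero])

end TensorProduct

theorem exists_isIdempotentElem_eq_tmul_one {k R A : Type*} [Field k] [IsAlgClosed k]
    [CommRing R] [Algebra k R] [CommRing A] [IsDomain A] [Algebra k A] [Algebra.FiniteType k A]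
    {e : R ⊗[k] A} (he : IsIdempotentElem e) :
    ∃ f : R, IsIdempotentElem f ∧ e = f ⊗ₜ 1 := by
  classical
  have : IsJacobsonRing A := isJacobsonRing_of_finiteType (A := k)
  let B := Module.Basis.ofVectorSpace k R
  have hF := finite_setOf_isIdempotentElem_mem_span (k := k)
    ((equivFinsuppOfBasisLeft B e).support.finite_toSet.image B)
  have hcover : ∀ m : Ideal A, m.IsMaximal →
      ∃ f ∈ hF.toFinset, coeffIdeal B (e - f ⊗ₜ 1) ≤ m := by
    intro m _
    obtain ⟨φ, rfl⟩ := exists_algHom_ker_eq_of_isMaximal k m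
    refine ⟨evalRight φ e, hF.mem_toFinset.2 ⟨evalRight_mem_span B φ e, he.map _⟩, ?_⟩
    exact coeffIdeal_le_ker_of_evalRight_eq_zero B (by simp)
  obtain ⟨f, hf, hbot⟩ := IsJacobsonRing.exists_eq_bot_of_forall_isMaximal hcover
  exact ⟨f, (hF.mem_toFinset.1 hf).2, sub_eq_zero.1 ((coeffIdeal_eq_bot_iff B).1 hbot)⟩

/-- If `k` is algebraically closed, `K|k` a field extension and `R` a `k`-algebra,
then every idempotent of `R ⊗_k K` is of the form `f ⊗ 1` with `f ∈ R` idempotent. -/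
theorem strongly_etale_stmt15
    (k K R : Type) [Field k] [IsAlgClosed k] [Field K] [Algebra k K]
    [CommRing R] [Algebra k R]
    (e : R ⊗[k] K) (he : IsIdempotentElem e) :
    ∃ f : R, IsIdempotentElem f ∧ e = f ⊗ₜ[k] (1 : K) := by
  obtain ⟨A, hA, z, rfl⟩ := exists_fg_and_mem_baseChange e
  have : Algebra.FiniteType k A := (Subalgebra.fg_iff_finiteType A).1 hA
  have hinj : Function.Injective (Algebra.TensorProduct.map (AlgHom.id R R) A.val) :=
    Module.Flat.lTensor_preserves_injective_linearMap A.val.toLinearMap Subtype.val_injective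
  obtain ⟨f, hf, rfl⟩ := exists_isIdempotentElem_eq_tmul_one (k := k) (e := z)
    (hinj (by rw [map_mul]; exact he.eq))
  exact ⟨f, hf, by simp⟩
end
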